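/- Let n ≥ 2, let Ω ⊂ ℝⁿ be a bounded open set whose topological boundary ∂Ω has finite (n−1)-dimensional Hausdorff measure, and let β > 0. Let t > 0 be admissible with witnesses x₁, x₂ in the closure of Ω (i.e. |x₁ − x₂| ≥ 2t and C_{xᵢ,t} ≤ 1/(βt) on ∂Ω), and let v = a₁ C_{x₁,t} + a₂ C_{x₂,t} with (a₁,a₂) ≠ (0,0). Then limsup_{p→∞} of [ ( ∫_Ω |∇v|^p dx + β^p ∫_{∂Ω} |v|^p dH^{n−1} ) / ∫_Ω |v|^p dx ]^{1/p} ≤ 1/t, where ∇v denotes the (almost everywhere defined) derivative of the Lipschitz function v, dx is Lebesgue measure on Ω, and H^{n−1} is the (n−1)-dimensional Hausdorff measure restricted to ∂Ω. -/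

import Mathlib

open Set Metric

/-- The normalized cone of height 1 and base radius `t` centered at `x`. -/
noncomputable def cone {n : ℕ} (x : EuclideanSpace ℝ (Fin n)) (t : ℝ)
    (y : EuclideanSpace ℝ (Fin n)) : ℝ :=
  max (t - ‖y - x‖) 0 / t

/-- `t > 0` is admissible for `Ω` and `β`. -/
def admissible {n : ℕ} (Ω : Set (EuclideanSpace ℝ (Fin n))) (β t : ℝ) : Prop :=
  0 < t ∧ ∃ x₁ ∈ closure Ω, ∃ x₂ ∈ closure Ω, 2 * t ≤ ‖x₁ - x₂‖ ∧
    (∀ y ∈ frontier Ω, cone x₁ t y ≤ 1 / (β * t)) ∧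
    (∀ y ∈ frontier Ω, cone x₂ t y ≤ 1 / (β * t))

/-- `s_β(Ω)`, the supremum of admissible radii. -/
noncomputable def sGeom {n : ℕ} (Ω : Set (EuclideanSpace ℝ (Fin n))) (β : ℝ) : ℝ :=
  sSup {t | admissible Ω β t}

/-- The smallest Lipschitz constant of `w` on the set `s`. -/
noncomputable def lipConst {n : ℕ} (s : Set (EuclideanSpace ℝ (Fin n)))
    (w : EuclideanSpace ℝ (Fin n) → ℝ) : ℝ :=
  sInf {L | 0 ≤ L ∧ ∀ x ∈ s, ∀ y ∈ s, |w x - w y| ≤ L * ‖x - y‖}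


open MeasureTheory


/-! Since `‖x₁ - x₂‖ ≥ 2t` the two cones have disjoint supports, so `v` is `(M / t)`-Lipschitz with
`M = max |a₁| |a₂|`, and admissibility gives `β |v| ≤ M / t` on `∂Ω`; hence the numerator of the
quotient is at most `(M / t) ^ p (|Ω| + H^{n-1}(∂Ω))`. If `x₀` is the apex of the cone with the larger
coefficient, then `|v| ≥ M (1 - r / t)` on `B(x₀, r) ∩ Ω`, a set of positive measure because
`x₀ ∈ closure Ω`, which bounds the denominator from below. After taking `p`-th roots the measures
disappear as `p → ∞`, so the `limsup` is at most `1 / (t - r)` for every `r ∈ (0, t)`. -/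

open Filter Topology

-- `dᵢ`, `eᵢ` stand for the distances of two points to the apexes of two cones with disjoint supports.
lemma abs_max_sub_max_add_abs_max_sub_max_le {t s d₁ d₂ e₁ e₂ : ℝ}
    (h₁ : |d₁ - e₁| ≤ s) (h₂ : |d₂ - e₂| ≤ s) (hd : 2 * t ≤ d₁ + d₂) (he : 2 * t ≤ e₁ + e₂) :
    |max (t - d₁) 0 - max (t - e₁) 0| + |max (t - d₂) 0 - max (t - e₂) 0| ≤ s := by
  rw [abs_le] at h₁ h₂
  grind [abs_eq_max_neg]

section Cone

variable {n : ℕ} {x x₁ x₂ y z : EuclideanSpace ℝ (Fin n)} {t : ℝ}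

lemma cone_nonneg (ht : 0 ≤ t) : 0 ≤ cone x t y :=
  div_nonneg (le_max_right _ _) ht

lemma cone_eq_zero_of_le_norm_sub (h : t ≤ ‖y - x‖) : cone x t y = 0 := by
  rw [cone, max_eq_right (sub_nonpos.2 h), zero_div]

lemma one_sub_div_le_cone (ht : 0 < t) : 1 - ‖y - x‖ / t ≤ cone x t y := by
  rw [one_sub_div ht.ne']
  exact div_le_div_of_nonneg_right (le_max_left _ _) ht.le

@[fun_prop]
lemma continuous_cone : Continuous (cone x t) := by
  unfold cone
  fun_prop

lemma two_mul_le_norm_sub_add_norm_sub (h : 2 * t ≤ ‖x₁ - x₂‖) (y : EuclideanSpace ℝ (Fin n)) :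
    2 * t ≤ ‖y - x₁‖ + ‖y - x₂‖ := by
  rw [← norm_sub_rev x₁]
  exact h.trans (norm_sub_le_norm_sub_add_norm_sub x₁ y x₂)

lemma cone_eq_zero_of_norm_sub_le (h : 2 * t ≤ ‖x₁ - x₂‖) (hy : ‖y - x₁‖ ≤ t) :
    cone x₂ t y = 0 :=
  cone_eq_zero_of_le_norm_sub (by linarith [two_mul_le_norm_sub_add_norm_sub h y])

lemma cone_eq_zero_or_cone_eq_zero (h : 2 * t ≤ ‖x₁ - x₂‖) :
    cone x₁ t y = 0 ∨ cone x₂ t y = 0 :=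
  (le_total t ‖y - x₁‖).imp cone_eq_zero_of_le_norm_sub (cone_eq_zero_of_norm_sub_le h)

lemma abs_cone_sub_add_abs_cone_sub_le (ht : 0 < t) (h : 2 * t ≤ ‖x₁ - x₂‖) :
    |cone x₁ t y - cone x₁ t z| + |cone x₂ t y - cone x₂ t z| ≤ ‖y - z‖ / t := by
  simp only [cone, ← sub_div, abs_div, abs_of_pos ht, ← add_div]
  gcongr
  exact abs_max_sub_max_add_abs_max_sub_max_le
    (by simpa using abs_norm_sub_norm_le (y - x₁) (z - x₁))
    (by simpa using abs_norm_sub_norm_le (y - x₂) (z - x₂))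
    (two_mul_le_norm_sub_add_norm_sub h y) (two_mul_le_norm_sub_add_norm_sub h z)

variable (a₁ a₂ : ℝ)

lemma abs_cone_combination_sub_le (ht : 0 < t) (h : 2 * t ≤ ‖x₁ - x₂‖) :
    |(a₁ * cone x₁ t y + a₂ * cone x₂ t y) - (a₁ * cone x₁ t z + a₂ * cone x₂ t z)| ≤
      max |a₁| |a₂| / t * ‖y - z‖ :=
  calc _ = |a₁ * (cone x₁ t y - cone x₁ t z) + a₂ * (cone x₂ t y - cone x₂ t z)| := by ring_nf
    _ ≤ |a₁| * |cone x₁ t y - cone x₁ t z| + |a₂| * |cone x₂ t y - cone x₂ t z| := by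
      rw [← abs_mul, ← abs_mul]
      exact abs_add_le _ _
    _ ≤ max |a₁| |a₂| * (|cone x₁ t y - cone x₁ t z| + |cone x₂ t y - cone x₂ t z|) := by
      rw [mul_add]
      gcongr
      exacts [le_max_left _ _, le_max_right _ _]
    _ ≤ max |a₁| |a₂| * (‖y - z‖ / t) := by
      gcongr
      exact abs_cone_sub_add_abs_cone_sub_le ht h
    _ = max |a₁| |a₂| / t * ‖y - z‖ := by ring

lemma norm_fderiv_cone_combination_le (ht : 0 < t) (h : 2 * t ≤ ‖x₁ - x₂‖) :
    ‖fderiv ℝ (fun y => a₁ * cone x₁ t y + a₂ * cone x₂ t y) y‖ ≤ max |a₁| |a₂| / t :=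
  norm_fderiv_le_of_lip' ℝ (by positivity)
    (Eventually.of_forall fun _ => abs_cone_combination_sub_le a₁ a₂ ht h)

lemma abs_cone_combination_le (ht : 0 ≤ t) (h : 2 * t ≤ ‖x₁ - x₂‖) :
    |a₁ * cone x₁ t y + a₂ * cone x₂ t y| ≤
      max |a₁| |a₂| * max (cone x₁ t y) (cone x₂ t y) := by
  rcases cone_eq_zero_or_cone_eq_zero (y := y) h with h₀ | h₀ <;>
    simp only [h₀, mul_zero, zero_add, add_zero, abs_mul, abs_of_nonneg (cone_nonneg ht)]
  · exact mul_le_mul (le_max_right _ _) (le_max_right _ _) (cone_nonneg ht) (by positivity)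
  · exact mul_le_mul (le_max_left _ _) (le_max_left _ _) (cone_nonneg ht) (by positivity)

lemma mul_abs_cone_combination_le {β : ℝ} (hβ : 0 < β) (ht : 0 < t) (h : 2 * t ≤ ‖x₁ - x₂‖)
    (h₁ : cone x₁ t y ≤ 1 / (β * t)) (h₂ : cone x₂ t y ≤ 1 / (β * t)) :
    β * |a₁ * cone x₁ t y + a₂ * cone x₂ t y| ≤ max |a₁| |a₂| / t :=
  calc _ ≤ β * (max |a₁| |a₂| * (1 / (β * t))) := by
        gcongr
        exact (abs_cone_combination_le a₁ a₂ ht.le h).trans (by gcongr; exact max_le h₁ h₂)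
    _ = max |a₁| |a₂| / t := by field_simp

lemma mul_one_sub_div_le_abs_cone_combination {r : ℝ} (ht : 0 < t) (h : 2 * t ≤ ‖x₁ - x₂‖)
    (hr : r ≤ t) (hy : y ∈ ball x₁ r) :
    |a₁| * (1 - r / t) ≤ |a₁ * cone x₁ t y + a₂ * cone x₂ t y| := by
  have hy₁ := mem_ball_iff_norm.1 hy
  rw [cone_eq_zero_of_norm_sub_le h (hy₁.le.trans hr), mul_zero, add_zero, abs_mul,
    abs_of_nonneg (cone_nonneg ht.le)]
  gcongr
  exact (by gcongr : 1 - r / t ≤ 1 - ‖y - x₁‖ / t).trans (one_sub_div_le_cone ht)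

lemma exists_mem_pair_mul_one_sub_div_le_abs_cone_combination (ht : 0 < t)
    (h : 2 * t ≤ ‖x₁ - x₂‖) :
    ∃ x₀ ∈ ({x₁, x₂} : Set (EuclideanSpace ℝ (Fin n))), ∀ r ≤ t, ∀ y ∈ ball x₀ r,
      max |a₁| |a₂| * (1 - r / t) ≤ |a₁ * cone x₁ t y + a₂ * cone x₂ t y| := by
  rcases le_total |a₂| |a₁| with ha | ha
  · refine ⟨x₁, Or.inl rfl, fun r hr y hy => ?_⟩
    rw [max_eq_left ha]
    exact mul_one_sub_div_le_abs_cone_combination a₁ a₂ ht h hr hy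
  · refine ⟨x₂, Or.inr rfl, fun r hr y hy => ?_⟩
    rw [max_eq_right ha, add_comm]
    exact mul_one_sub_div_le_abs_cone_combination a₂ a₁ ht (by rwa [norm_sub_rev]) hr hy

end Cone

lemma limsup_rpow_one_div_le {f : ℝ → ℝ} {C L : ℝ} (hC : 0 < C) (hL : 0 ≤ L)
    (hf : ∀ᶠ p in atTop, 0 ≤ f p ∧ f p ≤ C * L ^ p) :
    limsup (fun p => f p ^ (1 / p)) atTop ≤ L := by
  have hlim : Tendsto (fun p : ℝ => C ^ (1 / p) * L) atTop (𝓝 L) := by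
    have hroot : Tendsto (fun p : ℝ => C ^ (1 / p)) atTop (𝓝 1) := by
      simpa [Function.comp_def, one_div] using
        (Real.continuousAt_const_rpow hC.ne' (b := 0)).tendsto.comp tendsto_inv_atTop_zero
    simpa using hroot.mul_const L
  refine (limsup_le_limsup ?_ ?_ hlim.isBoundedUnder_le).trans_eq hlim.limsup_eq
  · filter_upwards [hf, eventually_gt_atTop 0] with p ⟨hf₀, hfC⟩ hp
    calc f p ^ (1 / p) ≤ (C * L ^ p) ^ (1 / p) := Real.rpow_le_rpow hf₀ hfC (one_div_pos.2 hp).le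
      _ = C ^ (1 / p) * L := by
        rw [Real.mul_rpow hC.le (Real.rpow_nonneg hL p), ← Real.rpow_mul hL,
          mul_one_div_cancel hp.ne', Real.rpow_one]
  · exact isCoboundedUnder_le_of_eventually_le atTop (hf.mono fun p hp => Real.rpow_nonneg hp.1 _)

lemma setIntegral_rpow_le {α : Type*} [MeasurableSpace α] {μ : Measure α} {s : Set α}
    {f : α → ℝ} {K p : ℝ} (hs : μ s < ⊤) (hp : 0 ≤ p) (hf₀ : ∀ x ∈ s, 0 ≤ f x)
    (hf : ∀ x ∈ s, f x ≤ K) :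
    ∫ x in s, f x ^ p ∂μ ≤ K ^ p * μ.real s :=
  (le_abs_self _).trans <| norm_setIntegral_le_of_norm_le_const hs fun x hx => by
    rw [Real.norm_of_nonneg (Real.rpow_nonneg (hf₀ x hx) p)]
    exact Real.rpow_le_rpow (hf₀ x hx) (hf x hx) hp

section RayleighQuotient

variable {n : ℕ} {Ω B : Set (EuclideanSpace ℝ (Fin n))} {v : EuclideanSpace ℝ (Fin n) → ℝ}
  {β p K c : ℝ}

noncomputable def robinRayleighQuotient (Ω : Set (EuclideanSpace ℝ (Fin n))) (β p : ℝ)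
    (v : EuclideanSpace ℝ (Fin n) → ℝ) : ℝ :=
  ((∫ x in Ω, ‖fderiv ℝ v x‖ ^ p) + β ^ p * ∫ y in frontier Ω, |v y| ^ p ∂μH[(n : ℝ) - 1]) /
    ∫ x in Ω, |v x| ^ p

lemma robinRayleighQuotient_nonneg (hβ : 0 ≤ β) : 0 ≤ robinRayleighQuotient Ω β p v := by
  unfold robinRayleighQuotient
  positivity

lemma robinRayleighQuotient_le (hΩ : volume Ω < ⊤) (hfr : μH[(n : ℝ) - 1] (frontier Ω) < ⊤)
    (hβ : 0 ≤ β) (hp : 0 < p) (hK : 0 ≤ K) (hc : 0 < c)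
    (hgrad : ∀ x ∈ Ω, ‖fderiv ℝ v x‖ ≤ K) (hbdry : ∀ y ∈ frontier Ω, β * |v y| ≤ K)
    (hint : IntegrableOn (fun x => |v x| ^ p) Ω) (hBΩ : B ⊆ Ω) (hB : MeasurableSet B)
    (hBpos : 0 < volume B) (hlow : ∀ y ∈ B, c ≤ |v y|) :
    robinRayleighQuotient Ω β p v ≤
      (volume.real Ω + μH[(n : ℝ) - 1].real (frontier Ω)) / volume.real B * (K / c) ^ p := by
  have hgrad' : ∫ x in Ω, ‖fderiv ℝ v x‖ ^ p ≤ K ^ p * volume.real Ω :=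
    setIntegral_rpow_le hΩ hp.le (fun _ _ => norm_nonneg _) hgrad
  have hbdry' : β ^ p * ∫ y in frontier Ω, |v y| ^ p ∂μH[(n : ℝ) - 1] ≤
      K ^ p * μH[(n : ℝ) - 1].real (frontier Ω) := by
    rw [← integral_const_mul]
    simp_rw [← Real.mul_rpow hβ (abs_nonneg _)]
    exact setIntegral_rpow_le hfr hp.le (fun _ _ => by positivity) hbdry
  have hBfin : volume B < ⊤ := (measure_mono hBΩ).trans_lt hΩ
  have hden : c ^ p * volume.real B ≤ ∫ x in Ω, |v x| ^ p :=
    calc c ^ p * volume.real B ≤ ∫ x in B, |v x| ^ p :=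
          setIntegral_ge_of_const_le_real hB hBfin.ne
            (fun y hy => Real.rpow_le_rpow hc.le (hlow y hy) hp.le) (hint.mono_set hBΩ)
      _ ≤ ∫ x in Ω, |v x| ^ p :=
          setIntegral_mono_set hint (ae_of_all _ fun _ => by positivity) hBΩ.eventuallyLE
  have hm : 0 < volume.real B := ENNReal.toReal_pos hBpos.ne' hBfin.ne
  calc robinRayleighQuotient Ω β p v ≤
        K ^ p * (volume.real Ω + μH[(n : ℝ) - 1].real (frontier Ω)) / (c ^ p * volume.real B) := by
        unfold robinRayleighQuotient
        rw [mul_add]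
        exact div_le_div₀ (by positivity) (add_le_add hgrad' hbdry') (by positivity) hden
    _ = _ := by
        rw [Real.div_rpow hK hc.le]
        field_simp

lemma limsup_robinRayleighQuotient_rpow_le (hΩ : Bornology.IsBounded Ω)
    (hfr : μH[(n : ℝ) - 1] (frontier Ω) < ⊤) (hβ : 0 ≤ β) (hK : 0 ≤ K) (hc : 0 < c)
    (hv : Continuous v) (hgrad : ∀ x ∈ Ω, ‖fderiv ℝ v x‖ ≤ K)
    (hbdry : ∀ y ∈ frontier Ω, β * |v y| ≤ K) (hBΩ : B ⊆ Ω) (hB : MeasurableSet B)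
    (hBpos : 0 < volume B) (hlow : ∀ y ∈ B, c ≤ |v y|) :
    limsup (fun p => robinRayleighQuotient Ω β p v ^ (1 / p)) atTop ≤ K / c := by
  have hΩfin : volume Ω < ⊤ := hΩ.measure_lt_top
  have hm : 0 < volume.real B :=
    ENNReal.toReal_pos hBpos.ne' ((measure_mono hBΩ).trans_lt hΩfin).ne
  have hA : 0 < (volume.real Ω + μH[(n : ℝ) - 1].real (frontier Ω)) / volume.real B :=
    div_pos (hm.trans_le ((measureReal_mono hBΩ hΩfin.ne).trans
      (le_add_of_nonneg_right measureReal_nonneg))) hm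
  refine limsup_rpow_one_div_le hA (div_nonneg hK hc.le) ?_
  filter_upwards [eventually_gt_atTop 0] with p hp
  have hint : IntegrableOn (fun x => |v x| ^ p) Ω :=
    ((hv.abs.rpow_const fun _ => Or.inr hp.le).continuousOn.integrableOn_compact
      hΩ.isCompact_closure).mono_set subset_closure
  exact ⟨robinRayleighQuotient_nonneg hβ,
    robinRayleighQuotient_le hΩfin hfr hβ hp hK hc hgrad hbdry hint hBΩ hB hBpos hlow⟩

end RayleighQuotient

theorem limsup_cone_rayleigh_quotient_le_general
    {n : ℕ} (Ω : Set (EuclideanSpace ℝ (Fin n)))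
    (ho : IsOpen Ω) (hb : Bornology.IsBounded Ω)
    (hfr : μH[(n : ℝ) - 1] (frontier Ω) < ⊤)
    (β : ℝ) (hβ : 0 < β)
    (t : ℝ) (ht : 0 < t) (x₁ x₂ : EuclideanSpace ℝ (Fin n))
    (hx₁ : x₁ ∈ closure Ω) (hx₂ : x₂ ∈ closure Ω)
    (hdist : 2 * t ≤ ‖x₁ - x₂‖)
    (hc₁ : ∀ y ∈ frontier Ω, cone x₁ t y ≤ 1 / (β * t))
    (hc₂ : ∀ y ∈ frontier Ω, cone x₂ t y ≤ 1 / (β * t))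
    (a₁ a₂ : ℝ) (ha : (a₁, a₂) ≠ (0, 0))
    (v : EuclideanSpace ℝ (Fin n) → ℝ)
    (hv : v = fun y => a₁ * cone x₁ t y + a₂ * cone x₂ t y) :
    Filter.limsup (fun p : ℝ =>
      (((∫ x in Ω, ‖fderiv ℝ v x‖ ^ p) +
          β ^ p * ∫ y in frontier Ω, |v y| ^ p ∂μH[(n : ℝ) - 1]) /
        ∫ x in Ω, |v x| ^ p) ^ (1 / p)) Filter.atTop ≤ 1 / t := by
  change limsup (fun p => robinRayleighQuotient Ω β p v ^ (1 / p)) atTop ≤ 1 / t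
  set M := max |a₁| |a₂|
  have hM : 0 < M := by
    contrapose! ha
    simp_all [M]
  obtain ⟨x₀, hx₀, hlow⟩ :=
    exists_mem_pair_mul_one_sub_div_le_abs_cone_combination a₁ a₂ ht hdist
  have hx₀Ω : x₀ ∈ closure Ω := by rcases hx₀ with rfl | rfl <;> assumption
  have hr : ∀ r ∈ Ioo 0 t,
      limsup (fun p => robinRayleighQuotient Ω β p v ^ (1 / p)) atTop ≤ 1 / (t - r) := by
    rintro r ⟨hr₀, hrt⟩
    have hBpos : 0 < volume (ball x₀ r ∩ Ω) :=
      (isOpen_ball.inter ho).measure_pos volume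
        (mem_closure_iff.1 hx₀Ω _ isOpen_ball (mem_ball_self hr₀))
    have hc : 0 < M * (1 - r / t) := mul_pos hM (by rw [sub_pos, div_lt_one ht]; exact hrt)
    calc _ ≤ M / t / (M * (1 - r / t)) :=
          limsup_robinRayleighQuotient_rpow_le hb hfr hβ.le (by positivity) hc
            (hv ▸ by fun_prop) (fun x _ => hv ▸ norm_fderiv_cone_combination_le a₁ a₂ ht hdist)
            (fun y hy => hv ▸ mul_abs_cone_combination_le a₁ a₂ hβ ht hdist (hc₁ y hy) (hc₂ y hy))
            inter_subset_right (measurableSet_ball.inter ho.measurableSet) hBpos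
            (fun y hy => hv ▸ hlow r hrt.le y hy.1)
      _ = 1 / (t - r) := by field_simp
  have hlim : Tendsto (fun r : ℝ => 1 / (t - r)) (𝓝[>] 0) (𝓝 (1 / t)) := by
    have : ContinuousAt (fun r : ℝ => 1 / (t - r)) 0 := by fun_prop (disch := simp [ht.ne'])
    simpa using this.tendsto.mono_left nhdsWithin_le_nhds
  exact ge_of_tendsto hlim (eventually_of_mem (Ioo_mem_nhdsGT ht) hr)

theorem limsup_cone_rayleigh_quotient_le
    {n : ℕ} (hn : 2 ≤ n) (Ω : Set (EuclideanSpace ℝ (Fin n)))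
    (ho : IsOpen Ω) (hb : Bornology.IsBounded Ω)
    (hfr : μH[(n : ℝ) - 1] (frontier Ω) < ⊤)
    (β : ℝ) (hβ : 0 < β)
    (t : ℝ) (ht : 0 < t) (x₁ x₂ : EuclideanSpace ℝ (Fin n))
    (hx₁ : x₁ ∈ closure Ω) (hx₂ : x₂ ∈ closure Ω)
    (hdist : 2 * t ≤ ‖x₁ - x₂‖)
    (hc₁ : ∀ y ∈ frontier Ω, cone x₁ t y ≤ 1 / (β * t))
    (hc₂ : ∀ y ∈ frontier Ω, cone x₂ t y ≤ 1 / (β * t))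
    (a₁ a₂ : ℝ) (ha : (a₁, a₂) ≠ (0, 0))
    (v : EuclideanSpace ℝ (Fin n) → ℝ)
    (hv : v = fun y => a₁ * cone x₁ t y + a₂ * cone x₂ t y) :
    Filter.limsup (fun p : ℝ =>
      (((∫ x in Ω, ‖fderiv ℝ v x‖ ^ p) +
          β ^ p * ∫ y in frontier Ω, |v y| ^ p ∂μH[(n : ℝ) - 1]) /
        ∫ x in Ω, |v x| ^ p) ^ (1 / p)) Filter.atTop ≤ 1 / t :=
  limsup_cone_rayleigh_quotient_le_general Ω ho hb hfr β hβ t ht x₁ x₂ hx₁ hx₂ hdist hc₁ hc₂ a₁ a₂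
    ha v hv
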